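/- Under the linear rotating Boussinesq system ∂ₜv_l + (1/ε)v_l^⊥ + (1/ε)∇_h p_l = 0, ∂ₜw_l + (1/ε)∂_z p_l - (1/ε)θ_l = 0, ∂ₜθ_l + (1/ε)w_l = 0, the generalized potential vorticity Ψ_l := ∇_h^⊥ θ_l + ∇_h w_l - ∂_z v_l satisfies the rotation equation ∂ₜΨ_l + (1/ε)Ψ_l^⊥ = 0. -/

import Mathlib

/-- Space-time: coordinates `(x, y, z, t)`. -/
abbrev R4 := ℝ × ℝ × ℝ × ℝ

noncomputable def dX (f : R4 → ℝ) (q : R4) : ℝ := fderiv ℝ f q (1, 0, 0, 0)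
noncomputable def dY (f : R4 → ℝ) (q : R4) : ℝ := fderiv ℝ f q (0, 1, 0, 0)
noncomputable def dZ (f : R4 → ℝ) (q : R4) : ℝ := fderiv ℝ f q (0, 0, 1, 0)
noncomputable def dT (f : R4 → ℝ) (q : R4) : ℝ := fderiv ℝ f q (0, 0, 0, 1)

lemma smooth_d (f : R4 → ℝ) (hf : ContDiff ℝ (⊤ : ℕ∞) f) (u : R4) :
    ContDiff ℝ (⊤ : ℕ∞) (fun r => fderiv ℝ f r u) :=
  (ContinuousLinearMap.apply ℝ ℝ u).contDiff.comp (hf.fderiv_right (by simp))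

lemma fd_eval (f : R4 → ℝ) (hf : ContDiff ℝ (⊤ : ℕ∞) f) (q u v : R4) :
    fderiv ℝ (fun r => fderiv ℝ f r v) q u = fderiv ℝ (fderiv ℝ f) q u v := by
  have hd : Differentiable ℝ (fderiv ℝ f) := (hf.fderiv_right (m := (⊤ : ℕ∞)) (by simp)).differentiable (by simp)
  have h := ((ContinuousLinearMap.apply ℝ ℝ v).hasFDerivAt.comp q (hd q).hasFDerivAt).fderiv
  rw [show (fun r => fderiv ℝ f r v) = (ContinuousLinearMap.apply ℝ ℝ v) ∘ (fderiv ℝ f) from rfl, h]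
  rfl

lemma d_comm (f : R4 → ℝ) (hf : ContDiff ℝ (⊤ : ℕ∞) f) (q u v : R4) :
    fderiv ℝ (fun r => fderiv ℝ f r v) q u = fderiv ℝ (fun r => fderiv ℝ f r u) q v := by
  rw [fd_eval f hf q u v, fd_eval f hf q v u]
  exact second_derivative_symmetric (fun y => (hf.differentiable (by simp) y).hasFDerivAt)
    (((hf.fderiv_right (m := (⊤ : ℕ∞)) (by simp)).differentiable (by simp) q).hasFDerivAt) u v

lemma fd_zero (g : R4 → ℝ) (hg : ∀ r, g r = 0) (q u : R4) : fderiv ℝ g q u = 0 := by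
  have : g = fun _ => (0:ℝ) := funext hg
  rw [this, fderiv_fun_const]
  simp

lemma fd_add {q : R4} (f g : R4 → ℝ) (hf : DifferentiableAt ℝ f q) (hg : DifferentiableAt ℝ g q)
    (u : R4) : fderiv ℝ (fun r => f r + g r) q u = fderiv ℝ f q u + fderiv ℝ g q u := by
  rw [fderiv_fun_add hf hg]; rfl

lemma fd_sub {q : R4} (f g : R4 → ℝ) (hf : DifferentiableAt ℝ f q) (hg : DifferentiableAt ℝ g q)
    (u : R4) : fderiv ℝ (fun r => f r - g r) q u = fderiv ℝ f q u - fderiv ℝ g q u := by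
  rw [fderiv_fun_sub hf hg]; rfl

lemma fd_neg {q : R4} (f : R4 → ℝ) (u : R4) :
    fderiv ℝ (fun r => -(f r)) q u = -(fderiv ℝ f q u) := by
  rw [fderiv_fun_neg]; rfl

lemma fd_cmul {q : R4} (f : R4 → ℝ) (hf : DifferentiableAt ℝ f q) (c : ℝ) (u : R4) :
    fderiv ℝ (fun r => c * f r) q u = c * fderiv ℝ f q u := by
  rw [fderiv_const_mul hf c]; rfl

/-- Under the linear rotating Boussinesq system, the generalized potential
vorticity `Ψ_l := ∇_h^⊥ θ_l + ∇_h w_l - ∂_z v_l` satisfies the rotation equation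
`∂ₜΨ_l + (1/ε)Ψ_l^⊥ = 0` (written componentwise, with `Ψ^⊥ = (-Ψ₂, Ψ₁)`). -/
theorem linear_generalized_pv_rotation (ε : ℝ) (hε : 0 < ε)
    (v1 v2 w p θ : R4 → ℝ)
    (hv1 : ContDiff ℝ (⊤ : ℕ∞) v1) (hv2 : ContDiff ℝ (⊤ : ℕ∞) v2)
    (hw : ContDiff ℝ (⊤ : ℕ∞) w) (hp : ContDiff ℝ (⊤ : ℕ∞) p) (hθ : ContDiff ℝ (⊤ : ℕ∞) θ)
    (heqv1 : ∀ q : R4, dT v1 q - (1 / ε) * v2 q + (1 / ε) * dX p q = 0)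
    (heqv2 : ∀ q : R4, dT v2 q + (1 / ε) * v1 q + (1 / ε) * dY p q = 0)
    (heqw : ∀ q : R4, dT w q + (1 / ε) * dZ p q - (1 / ε) * θ q = 0)
    (heqθ : ∀ q : R4, dT θ q + (1 / ε) * w q = 0) :
    ∀ q : R4,
      dT (fun r => -(dY θ r) + dX w r - dZ v1 r) q
        - (1 / ε) * (dX θ q + dY w q - dZ v2 q) = 0 ∧
      dT (fun r => dX θ r + dY w r - dZ v2 r) q
        + (1 / ε) * (-(dY θ q) + dX w q - dZ v1 q) = 0 := by
  intro q
  simp only [dT, dX, dY, dZ] at heqv1 heqv2 heqw heqθ ⊢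
  have Dθ : ∀ u, DifferentiableAt ℝ (fun r => fderiv ℝ θ r u) q :=
    fun u => ((smooth_d θ hθ u).differentiable (by simp)) q
  have Dw : ∀ u, DifferentiableAt ℝ (fun r => fderiv ℝ w r u) q :=
    fun u => ((smooth_d w hw u).differentiable (by simp)) q
  have Dp : ∀ u, DifferentiableAt ℝ (fun r => fderiv ℝ p r u) q :=
    fun u => ((smooth_d p hp u).differentiable (by simp)) q
  have Dv1 : ∀ u, DifferentiableAt ℝ (fun r => fderiv ℝ v1 r u) q :=
    fun u => ((smooth_d v1 hv1 u).differentiable (by simp)) q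
  have Dv2 : ∀ u, DifferentiableAt ℝ (fun r => fderiv ℝ v2 r u) q :=
    fun u => ((smooth_d v2 hv2 u).differentiable (by simp)) q
  have dw := hw.differentiable (by simp) q
  have dθ' := hθ.differentiable (by simp) q
  have dv1' := hv1.differentiable (by simp) q
  have dv2' := hv2.differentiable (by simp) q
  have Hθ : ∀ u, fderiv ℝ (fun r => fderiv ℝ θ r (0,0,0,1)) q u
      = -((1/ε) * fderiv ℝ w q u) := by
    intro u
    have h0 := fd_zero _ heqθ q u
    rw [fd_add _ _ (Dθ _) (dw.const_mul _), fd_cmul _ dw] at h0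
    linarith
  have Hw : ∀ u, fderiv ℝ (fun r => fderiv ℝ w r (0,0,0,1)) q u
      = -((1/ε) * fderiv ℝ (fun r => fderiv ℝ p r (0,0,1,0)) q u) + (1/ε) * fderiv ℝ θ q u := by
    intro u
    have h0 := fd_zero _ heqw q u
    rw [fd_sub _ _ ((Dw _).fun_add ((Dp _).const_mul _)) (dθ'.const_mul _),
        fd_add _ _ (Dw _) ((Dp _).const_mul _), fd_cmul _ (Dp _), fd_cmul _ dθ'] at h0
    linarith
  have Hv1 : ∀ u, fderiv ℝ (fun r => fderiv ℝ v1 r (0,0,0,1)) q u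
      = (1/ε) * fderiv ℝ v2 q u - (1/ε) * fderiv ℝ (fun r => fderiv ℝ p r (1,0,0,0)) q u := by
    intro u
    have h0 := fd_zero _ heqv1 q u
    rw [fd_add _ _ ((Dv1 _).fun_sub (dv2'.const_mul _)) ((Dp _).const_mul _),
        fd_sub _ _ (Dv1 _) (dv2'.const_mul _), fd_cmul _ dv2', fd_cmul _ (Dp _)] at h0
    linarith
  have Hv2 : ∀ u, fderiv ℝ (fun r => fderiv ℝ v2 r (0,0,0,1)) q u
      = -((1/ε) * fderiv ℝ v1 q u) - (1/ε) * fderiv ℝ (fun r => fderiv ℝ p r (0,1,0,0)) q u := by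
    intro u
    have h0 := fd_zero _ heqv2 q u
    rw [fd_add _ _ ((Dv2 _).fun_add (dv1'.const_mul _)) ((Dp _).const_mul _),
        fd_add _ _ (Dv2 _) (dv1'.const_mul _), fd_cmul _ dv1', fd_cmul _ (Dp _)] at h0
    linarith
  constructor
  · rw [fd_sub _ _ ((Dθ (0,1,0,0)).fun_neg.fun_add (Dw (1,0,0,0))) (Dv1 (0,0,1,0)),
        fd_add _ _ (Dθ (0,1,0,0)).fun_neg (Dw (1,0,0,0)), fd_neg,
        d_comm θ hθ q (0,0,0,1) (0,1,0,0), d_comm w hw q (0,0,0,1) (1,0,0,0),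
        d_comm v1 hv1 q (0,0,0,1) (0,0,1,0), Hθ, Hw, Hv1,
        d_comm p hp q (1,0,0,0) (0,0,1,0)]
    ring
  · rw [fd_sub _ _ ((Dθ (1,0,0,0)).fun_add (Dw (0,1,0,0))) (Dv2 (0,0,1,0)),
        fd_add _ _ (Dθ (1,0,0,0)) (Dw (0,1,0,0)),
        d_comm θ hθ q (0,0,0,1) (1,0,0,0), d_comm w hw q (0,0,0,1) (0,1,0,0),
        d_comm v2 hv2 q (0,0,0,1) (0,0,1,0), Hθ, Hw, Hv2,
        d_comm p hp q (0,1,0,0) (0,0,1,0)]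
    ring
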